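/- Assume λ = μ⁺ for an uncountable regular μ, C̄ = ⟨C_α : α ∈ S^{μ⁺}_μ⟩ with C_α = {a^ξ_α : ξ < μ} is a club-guessing sequence in the sense that for every club E ⊆ μ⁺ there is α with {ξ < μ : a^{ξ+1}_α ∈ E} stationary in μ, and 𝒜_NS ⊆ [μ]^μ is a nonstationary MAD family of size μ⁺. Then X = X[μ⁺, μ, 𝒜_NS, C̄] is high. -/

import Mathlib

open Set Ordinal Cardinal Topology

noncomputable section

namespace DSoukupPaper

/-- The set `S^λ_μ` of ordinals below `lam` of cofinality `mu`. -/
def Sset (lam : Ordinal.{0}) (mu : Cardinal.{0}) : Set Ordinal := {α | α < lam ∧ α.cof = mu}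

/-- `C` is a club in the ordinal `o`. -/
def IsClubBelow (C : Set Ordinal.{0}) (o : Ordinal.{0}) : Prop :=
  C ⊆ Set.Iio o ∧ (∀ β < o, ∃ γ ∈ C, β ≤ γ) ∧
    (∀ β < o, Order.IsSuccLimit β → (∀ γ < β, ∃ δ ∈ C, γ < δ ∧ δ < β) → β ∈ C)

/-- `A` is nonstationary in the ordinal `o`. -/
def IsNonstationaryBelow (A : Set Ordinal.{0}) (o : Ordinal.{0}) : Prop :=
  ∃ C : Set Ordinal, IsClubBelow C o ∧ ∀ x ∈ A, x ∉ C

/-- `A` is stationary in the ordinal `o`. -/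
def IsStationaryBelow (A : Set Ordinal.{0}) (o : Ordinal.{0}) : Prop :=
  ∀ C : Set Ordinal, IsClubBelow C o → ∃ x ∈ A, x ∈ C

/-- A `T₁` space is linearly D iff every nontrivial monotone open cover admits a
closed discrete big set (Guo–Junnila characterization, taken as definition). -/
def LinearlyDSpace (Y : Type*) [TopologicalSpace Y] : Prop :=
  ∀ 𝒰 : Set (Set Y), (∀ U ∈ 𝒰, IsOpen U) → ⋃₀ 𝒰 = Set.univ →
    IsChain (· ⊆ ·) 𝒰 → (∀ U ∈ 𝒰, U ≠ Set.univ) →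
    ∃ D : Set Y, IsClosed D ∧ DiscreteTopology D ∧ ∀ U ∈ 𝒰, ¬D ⊆ U

/-- The data of the construction `X[λ,μ,𝒜,C̄]`: cardinals `λ > μ = cf(μ)`,
a MAD family `𝒜 = {M^φ : φ < κ} ⊆ [μ]^μ`, and an `S^λ_μ`-club sequence
`C̄ = ⟨C_α : α ∈ S^λ_μ⟩`, given via increasing enumerations `a α : μ → C_α`. -/
structure Setup where
  lam : Cardinal.{0}
  mu : Cardinal.{0}
  kappa : Cardinal.{0}
  mu_reg : mu.IsRegular
  mu_lt_lam : mu < lam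
  /-- the MAD family: `M φ` for `φ < κ` -/
  M : Ordinal.{0} → Set Ordinal.{0}
  M_sub : ∀ φ < kappa.ord, M φ ⊆ Set.Iio mu.ord
  M_card : ∀ φ < kappa.ord, #(M φ) = Cardinal.lift.{1} mu
  M_ad : ∀ φ < kappa.ord, ∀ ψ < kappa.ord, φ ≠ ψ →
    #(↥(M φ ∩ M ψ)) < Cardinal.lift.{1} mu
  M_mad : ∀ N ⊆ Set.Iio mu.ord, #N = Cardinal.lift.{1} mu →
    ∃ φ < kappa.ord, #(↥(N ∩ M φ)) = Cardinal.lift.{1} mu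
  /-- the club sequence: `a α ξ` is the `ξ`-th element of `C_α` -/
  a : Ordinal.{0} → Ordinal.{0} → Ordinal.{0}
  a_mono : ∀ α ∈ Sset lam.ord mu, ∀ ξ < mu.ord, ∀ ζ < ξ, a α ζ < a α ξ
  a_lt : ∀ α ∈ Sset lam.ord mu, ∀ ξ < mu.ord, a α ξ < α
  a_unbounded : ∀ α ∈ Sset lam.ord mu, ∀ β < α, ∃ ξ < mu.ord, β ≤ a α ξ
  a_closed : ∀ α ∈ Sset lam.ord mu, ∀ ξ < mu.ord, Order.IsSuccLimit ξ →
    IsLUB (a α '' Set.Iio ξ) (a α ξ)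

namespace Setup

variable (P : Setup)

/-- `C_α` as a set. -/
def C (α : Ordinal) : Set Ordinal := P.a α '' Set.Iio P.mu.ord

open Classical in
/-- the interval `I^ξ_α`. -/
def I (α ξ : Ordinal) : Set Ordinal :=
  if Order.IsSuccLimit ξ then Set.Icc (P.a α ξ) (P.a α (ξ + 1)) else Set.Ioc (P.a α ξ) (P.a α (ξ + 1))

/-- the underlying set of the space: a subset of `λ × κ`. -/
def Xset : Set (Ordinal × Ordinal) :=
  {p | p.1 < P.lam.ord ∧
    ((p.1 ∈ Sset P.lam.ord P.mu ∧ p.2 < P.kappa.ord) ∨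
      (p.1 ∉ Sset P.lam.ord P.mu ∧ p.2 = 0))}

/-- the column `X_α` (as a set of pairs). -/
def col (α : Ordinal) : Set (Ordinal × Ordinal) := {p ∈ P.Xset | p.1 = α}

/-- basic neighborhood `U((α,φ),η)` for `α ∈ S^λ_μ`. -/
def U1 (α φ η : Ordinal) : Set (Ordinal × Ordinal) :=
  {(α, φ)} ∪ ⋃ γ ∈ (⋃ ξ ∈ {ξ | ξ ∈ P.M φ ∧ η ≤ ξ}, P.I α ξ), P.col γ

/-- basic neighborhood `U(α,β) = ⋃{X_γ : β < γ ≤ α}`. -/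
def U3 (α β : Ordinal) : Set (Ordinal × Ordinal) := ⋃ γ ∈ Set.Ioc β α, P.col γ

/-- the collection of basic open sets. -/
def basics : Set (Set (Ordinal × Ordinal)) :=
  {B | (∃ α ∈ Sset P.lam.ord P.mu, ∃ φ < P.kappa.ord, ∃ η < P.mu.ord, B = P.U1 α φ η) ∨
    (∃ α < P.lam.ord, α.cof < P.mu ∧ B = {(α, 0)}) ∨
    (∃ α < P.lam.ord, P.mu < α.cof ∧ ∃ β < α, B = P.U3 α β)}

/-- the topology of `X[λ,μ,𝒜,C̄]`, generated by the basic open sets. -/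
instance instTopo : TopologicalSpace ↥P.Xset :=
  TopologicalSpace.generateFrom {V | ∃ B ∈ P.basics, V = Subtype.val ⁻¹' B}

/-- the column `X_α` viewed inside the space. -/
def colS (α : Ordinal) : Set ↥P.Xset := {x | (x : Ordinal × Ordinal).1 = α}

/-- the projection `π(F) = {α < λ : F ∩ X_α ≠ ∅}`. -/
def pi (F : Set ↥P.Xset) : Set Ordinal := {α | ∃ x ∈ F, (x : Ordinal × Ordinal).1 = α}

/-- `F` is unbounded iff `π(F)` is unbounded in `λ`. -/
def Unbounded (F : Set ↥P.Xset) : Prop := ∀ β < P.lam.ord, ∃ γ ∈ P.pi F, β < γ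

/-- `F` is high enough iff `|{α < λ : |F_α| = |F|}| ≥ μ`. -/
def HighEnough (F : Set ↥P.Xset) : Prop :=
  Cardinal.lift.{1} P.mu ≤ #({α | #(↥(F ∩ P.colS α)) = #F} : Set Ordinal)

end Setup
end DSoukupPaper


/-!
Let `F` be closed and unbounded and `s < λ`. The closure of `π(F) ∩ (s, λ)` is club in `λ`, so
club guessing gives `α ∈ S^λ_μ` for which the set `N` of `ξ < μ` such that some column of `F` lies
over `(a^ξ_α, a^{ξ+1}_α]` is stationary in `μ`. Removing fewer than `μ` of the nonstationary sets
`M^φ` from `N` leaves a stationary, hence unbounded, set; by maximality of `𝒜` this forces more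
than `μ` indices `φ` with `|N ∩ M^φ| = μ`. Every neighbourhood of such a point `(α, φ)` contains
the columns over `I^ξ_α` for all large `ξ ∈ M^φ` (since `λ = μ⁺`, no basic set of the third kind
contains it), so it meets `F` and `(α, φ) ∈ F`. Hence `|F ∩ X_α| = μ⁺ ≥ |F|` for unboundedly many
`α < λ`.
-/

namespace DSoukupPaper

open Set.Notation

universe u

theorem lift_cof_le_mk_of_forall_inter_Ico_nonempty {o : Ordinal.{u}} {A : Set Ordinal.{u}}
    (hA : ∀ β < o, (A ∩ Ico β o).Nonempty) : Cardinal.lift.{u + 1} o.cof ≤ #A := by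
  have hcofinal : IsCofinal (Iio o ↓∩ A) := fun β => by
    obtain ⟨γ, hγA, hβγ, hγo⟩ := hA β β.2
    exact ⟨⟨γ, hγo⟩, hγA, hβγ⟩
  calc Cardinal.lift.{u + 1} o.cof = Order.cof (Iio o) := by rw [Ordinal.cof_Iio, Ordinal.lift_cof]
    _ ≤ #(Iio o ↓∩ A) := Order.cof_le hcofinal
    _ ≤ #A := Cardinal.mk_preimage_of_injective _ _ Subtype.val_injective

theorem inter_Ici_nonempty_of_mk_eq {c : Cardinal.{u}} {A : Set Ordinal.{u}}
    (hA : #A = Cardinal.lift.{u + 1} c) {β : Ordinal} (hβ : β < c.ord) : (A ∩ Ici β).Nonempty := by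
  by_contra! h
  have hAβ : A ⊆ Iio β := fun x hx => show x < β from not_le.1 fun hβx => (h.subset ⟨hx, hβx⟩).elim
  have := Cardinal.mk_le_mk_of_subset hAβ
  rw [hA, Cardinal.mk_Iio_ordinal, Cardinal.lift_le] at this
  exact (Cardinal.lt_ord.1 hβ).not_ge this

theorem isClubBelow_iff_isClub {C : Set Ordinal.{0}} {o : Ordinal.{0}} (hC : C ⊆ Iio o) :
    IsClubBelow C o ↔ IsClub (Iio o ↓∩ C) := by
  rw [isClub_iff, dirSupClosed_iff_of_linearOrder, IsClubBelow, and_iff_right hC]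
  refine ⟨fun ⟨hunb, hcl⟩ => ⟨fun d hdC hd a ha => ?_, fun β => ?_⟩,
    fun ⟨hcl, hcof⟩ => ⟨fun β hβ => ?_, fun β hβ hlim happ => ?_⟩⟩
  · by_cases had : a ∈ d
    · exact hdC had
    have hlt : ∀ δ ∈ d, δ.1 < a.1 := fun δ hδd => (ha.1 hδd).lt_of_ne (ne_of_mem_of_not_mem hδd had)
    have happ : ∀ γ < a.1, ∃ δ ∈ C, γ < δ ∧ δ < a.1 := fun γ hγ => by
      obtain ⟨δ, hδd, hγδ⟩ := (lt_isLUB_iff ha).1 (show (⟨γ, hγ.trans a.2⟩ : Iio o) < a from hγ)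
      exact ⟨δ, hdC hδd, hγδ, hlt δ hδd⟩
    obtain ⟨δ, hδd⟩ := hd
    refine hcl a.1 a.2 (Ordinal.isSuccLimit_iff.2 ⟨?_, fun γ hγ => ?_⟩) happ
    · exact (zero_le.trans_lt (hlt δ hδd)).ne'
    · obtain ⟨δ, -, h1, h2⟩ := happ γ hγ.lt
      exact hγ.2 h1 h2
  · obtain ⟨γ, hγC, hβγ⟩ := hunb β β.2
    exact ⟨⟨γ, hC hγC⟩, hγC, hβγ⟩
  · obtain ⟨γ, hγC, hβγ⟩ := hcof ⟨β, hβ⟩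
    exact ⟨γ, hγC, hβγ⟩
  · obtain ⟨δ, hδC, -, hδβ⟩ := happ 0 hlim.bot_lt
    refine hcl (d := Iio o ↓∩ (C ∩ Iio β)) (fun x hx => hx.1) ⟨⟨δ, hδβ.trans hβ⟩, hδC, hδβ⟩
      (a := ⟨β, hβ⟩) ⟨fun x hx => hx.2.le, fun b hb => ?_⟩
    by_contra! hbβ
    obtain ⟨δ, hδC, hbδ, hδβ⟩ := happ b hbβ
    exact (hb (a := ⟨δ, hδβ.trans hβ⟩) ⟨hδC, hδβ⟩).not_gt hbδ

theorem isClubBelow_Ico {β o : Ordinal.{0}} (hβ : β < o) : IsClubBelow (Ico β o) o :=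
  ⟨fun _ hx => hx.2, fun γ hγ => ⟨max β γ, ⟨le_max_left _ _, max_lt hβ hγ⟩, le_max_right _ _⟩,
    fun _ hγ hlim happ => ⟨(happ 0 hlim.bot_lt).elim fun _ h => h.1.1.trans h.2.2.le, hγ⟩⟩

theorem isClubBelow_setOf_forall_exists_mem_Ioc {o : Ordinal.{0}} {A : Set Ordinal}
    (hA : ∀ β < o, ∃ γ ∈ A, β < γ ∧ γ < o) :
    IsClubBelow {β | β < o ∧ ∀ γ < β, ∃ δ ∈ A, δ ∈ Ioc γ β} o := by
  refine ⟨fun _ hβ => hβ.1, fun β hβ => ?_, fun β hβ _ happ => ⟨hβ, fun γ hγ => ?_⟩⟩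
  · obtain ⟨γ, hγA, hβγ, hγo⟩ := hA β hβ
    exact ⟨γ, ⟨hγo, fun γ' hγ' => ⟨γ, hγA, hγ', le_rfl⟩⟩, hβγ.le⟩
  · obtain ⟨δ', hδ', hγδ', hδ'β⟩ := happ γ hγ
    obtain ⟨δ, hδA, hγδ, hδδ'⟩ := hδ'.2 γ hγδ'
    exact ⟨δ, hδA, hγδ, hδδ'.trans hδ'β.le⟩

theorem IsStationaryBelow.mono {N N' : Set Ordinal.{0}} {o : Ordinal.{0}}
    (hN : IsStationaryBelow N o) (h : N ⊆ N') : IsStationaryBelow N' o := fun C hC =>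
  (hN C hC).imp fun _ hx => ⟨h hx.1, hx.2⟩

theorem IsStationaryBelow.exists_mem_Ico {N : Set Ordinal.{0}} {o β : Ordinal.{0}}
    (hN : IsStationaryBelow N o) (hβ : β < o) : (N ∩ Ico β o).Nonempty :=
  hN _ (isClubBelow_Ico hβ)

theorem IsStationaryBelow.diff_biUnion {o : Ordinal.{0}} (ho : ℵ₀ < o.cof) {N : Set Ordinal}
    (hN : IsStationaryBelow N o) {Ψ : Set Ordinal} (hΨ : #Ψ < Cardinal.lift.{1} o.cof)
    {U : Ordinal → Set Ordinal} (hU : ∀ ψ ∈ Ψ, IsNonstationaryBelow (U ψ) o) :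
    IsStationaryBelow (N \ ⋃ ψ ∈ Ψ, U ψ) o := by
  intro C hC
  choose D hD hUD using fun ψ : Ψ => hU ψ ψ.2
  have hcof : Order.cof (Iio o) = Cardinal.lift.{1} o.cof := by
    rw [Ordinal.cof_Iio, Ordinal.lift_cof]
  have hclub : IsClub (⋂ j : Option Ψ, Iio o ↓∩ j.elim C D) := by
    refine IsClub.iInter ?_ ?_ fun j => ?_
    · rw [hcof]
      exact (Cardinal.aleph0_lt_lift.2 ho).ne'
    · rw [Cardinal.lift_lt, Cardinal.mk_option, hcof]
      have := Cardinal.aleph0_lt_lift.{0, 1}.2 ho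
      exact Cardinal.add_lt_of_lt this.le hΨ (Cardinal.one_lt_aleph0.trans this)
    · cases j with
      | none => exact (isClubBelow_iff_isClub hC.1).1 hC
      | some ψ => exact (isClubBelow_iff_isClub (hD ψ).1).1 (hD ψ)
  have hclub' : IsClubBelow (Subtype.val '' ⋂ j : Option Ψ, Iio o ↓∩ j.elim C D) o := by
    rwa [isClubBelow_iff_isClub (image_subset_iff.2 fun x _ => x.2),
      preimage_image_eq _ Subtype.val_injective]
  obtain ⟨_, hxN, ⟨x, hx, rfl⟩⟩ := hN _ hclub'
  rw [mem_iInter] at hx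
  refine ⟨x, ⟨hxN, ?_⟩, hx none⟩
  simp only [mem_iUnion, not_exists]
  exact fun ψ hψ hxU => hUD ⟨ψ, hψ⟩ x hxU (hx (some ⟨ψ, hψ⟩))

theorem exists_subset_mk_eq_forall_mk_inter_lt {μ : Cardinal.{0}} (hμ : μ.IsRegular)
    {N : Set Ordinal} {M : Ordinal → Set Ordinal} {Φ : Set Ordinal}
    (hN : ∀ Ψ ⊆ Φ, #Ψ < Cardinal.lift.{1} μ → ∀ β < μ.ord,
      ((N \ ⋃ ψ ∈ Ψ, M ψ) ∩ Ico β μ.ord).Nonempty)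
    (hΦ : #Φ ≤ Cardinal.lift.{1} μ) :
    ∃ N' ⊆ N ∩ Iio μ.ord, #N' = Cardinal.lift.{1} μ ∧
      ∀ φ ∈ Φ, #(N' ∩ M φ : Set Ordinal) < Cardinal.lift.{1} μ := by
  -- Diagonalise along an enumeration `e` of `Φ` in order type at most `μ`: the `i`-th point
  -- avoids every `M ψ` with `ψ` enumerated before `i`.
  obtain ⟨e⟩ : Nonempty (Φ ↪ Iio μ.ord) := by
    rwa [← Cardinal.le_def, Cardinal.mk_Iio_ordinal, Cardinal.card_ord]
  have hsmall : ∀ i < μ.ord, #(Iio i) < Cardinal.lift.{1} μ := fun i hi => by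
    rwa [Cardinal.mk_Iio_ordinal, Cardinal.lift_lt, ← Cardinal.lt_ord]
  let Ψ (i : Ordinal) : Set Ordinal := Subtype.val '' (e ⁻¹' (Iio μ.ord ↓∩ Iio i))
  have hΨ (i : Ordinal) (hi : i < μ.ord) : #(Ψ i) < Cardinal.lift.{1} μ := calc
    #(Ψ i) ≤ #(e ⁻¹' (Iio μ.ord ↓∩ Iio i)) := Cardinal.mk_image_le
    _ ≤ #(Iio μ.ord ↓∩ Iio i) := Cardinal.mk_preimage_of_injective _ _ e.injective
    _ ≤ #(Iio i) := Cardinal.mk_preimage_of_injective _ _ Subtype.val_injective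
    _ < _ := hsmall i hi
  choose g hg using fun i : Iio μ.ord =>
    hN (Ψ i) (by rintro _ ⟨ψ, -, rfl⟩; exact ψ.2) (hΨ i i.2) i i.2
  have hgμ : range g ⊆ Iio μ.ord := range_subset_iff.2 fun i => (hg i).2.2
  refine ⟨range g, fun _ hx => ⟨range_subset_iff.2 (fun i => (hg i).1.1) hx, hgμ hx⟩,
    le_antisymm ?_ ?_, fun φ hφ => ?_⟩
  · simpa using Cardinal.mk_le_mk_of_subset hgμ
  · simpa [hμ.cof_ord] using lift_cof_le_mk_of_forall_inter_Ico_nonempty (A := range g)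
      fun β hβ => ⟨g ⟨β, hβ⟩, mem_range_self _, (hg _).2⟩
  have hsub : range g ∩ M φ ⊆ g '' (Iio μ.ord ↓∩ Iio ((e ⟨φ, hφ⟩).1 + 1)) := by
    rintro _ ⟨⟨i, rfl⟩, hiM⟩
    refine ⟨i, show i.1 < _ from Order.lt_add_one_iff.2 (not_lt.1 fun hlt => (hg i).1.2 ?_), rfl⟩
    exact mem_biUnion ⟨⟨φ, hφ⟩, hlt, rfl⟩ hiM
  calc #(range g ∩ M φ : Set Ordinal) ≤ _ := Cardinal.mk_le_mk_of_subset hsub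
    _ ≤ _ := Cardinal.mk_image_le
    _ ≤ _ := Cardinal.mk_preimage_of_injective _ _ Subtype.val_injective
    _ < _ := hsmall _ ((Cardinal.isSuccLimit_ord hμ.aleph0_le).add_one_lt (e ⟨φ, hφ⟩).2)

namespace Setup

variable (P : Setup)

theorem isSuccLimit_mu_ord : Order.IsSuccLimit P.mu.ord :=
  Cardinal.isSuccLimit_ord P.mu_reg.aleph0_le

/-- The paper's `Φ_α`, for `N = N_α`. -/
def largeIntersectionIndices (N : Set Ordinal) : Set Ordinal :=
  {φ | φ < P.kappa.ord ∧ #(N ∩ P.M φ : Set Ordinal) = Cardinal.lift.{1} P.mu}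

theorem lift_mu_lt_mk_largeIntersectionIndices {N : Set Ordinal}
    (hN : ∀ Ψ ⊆ Iio P.kappa.ord, #Ψ < Cardinal.lift.{1} P.mu → ∀ β < P.mu.ord,
      ((N \ ⋃ ψ ∈ Ψ, P.M ψ) ∩ Ico β P.mu.ord).Nonempty) :
    Cardinal.lift.{1} P.mu < #(P.largeIntersectionIndices N) := by
  by_contra! hΦ
  obtain ⟨N', hN'N, hN'card, hN'M⟩ := exists_subset_mk_eq_forall_mk_inter_lt P.mu_reg
    (fun Ψ hΨ => hN Ψ fun ψ hψ => (hΨ hψ).1) hΦ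
  obtain ⟨φ, hφ, hφN'⟩ := P.M_mad N' (fun ξ hξ => (hN'N hξ).2) hN'card
  refine (hN'M φ ⟨hφ, le_antisymm ?_ ?_⟩).ne hφN'
  · exact (Cardinal.mk_le_mk_of_subset inter_subset_right).trans (P.M_card φ hφ).le
  · exact hφN' ▸ Cardinal.mk_le_mk_of_subset
      (inter_subset_inter_left _ fun ξ hξ => (hN'N hξ).1)

theorem a_le_a_of_le {α ζ ξ : Ordinal} (hα : α ∈ Sset P.lam.ord P.mu) (hξ : ξ < P.mu.ord)
    (hζξ : ζ ≤ ξ) : P.a α ζ ≤ P.a α ξ := by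
  rcases hζξ.lt_or_eq with h | rfl
  exacts [(P.a_mono α hα ξ hξ ζ h).le, le_rfl]

theorem a_ne_of_isSuccLimit {α α' ξ : Ordinal} (hα' : α' ∈ Sset P.lam.ord P.mu)
    (hα : α ∈ Sset P.lam.ord P.mu) (hξ : ξ < P.mu.ord) (hlim : Order.IsSuccLimit ξ) :
    P.a α' ξ ≠ α := by
  -- `a α' ξ` is the supremum of `|ξ| < μ` smaller ordinals, so its cofinality is below `μ`.
  rintro rfl
  have hcofinal : ∀ β < P.a α' ξ, (P.a α' '' Iio ξ ∩ Ico β (P.a α' ξ)).Nonempty := by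
    intro β hβ
    obtain ⟨_, ⟨ζ, hζ, rfl⟩, hβζ⟩ := (lt_isLUB_iff (P.a_closed α' hα' ξ hξ hlim)).1 hβ
    exact ⟨_, mem_image_of_mem _ hζ, hβζ.le, P.a_mono α' hα' ξ hξ ζ hζ⟩
  have := (lift_cof_le_mk_of_forall_inter_Ico_nonempty hcofinal).trans Cardinal.mk_image_le
  rw [hα.2, Cardinal.mk_Iio_ordinal, Cardinal.lift_le] at this
  exact (Cardinal.lt_ord.1 hξ).not_ge this

theorem Ioc_subset_I (α ξ : Ordinal) : Ioc (P.a α ξ) (P.a α (ξ + 1)) ⊆ P.I α ξ := by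
  unfold I
  split_ifs
  exacts [Ioc_subset_Icc_self, subset_rfl]

theorem mem_Ioc_of_mem_I {α α' ξ : Ordinal} (hα' : α' ∈ Sset P.lam.ord P.mu)
    (hα : α ∈ Sset P.lam.ord P.mu) (hξ : ξ < P.mu.ord) (h : α ∈ P.I α' ξ) :
    α ∈ Ioc (P.a α' ξ) (P.a α' (ξ + 1)) := by
  unfold I at h
  split_ifs at h with hlim
  exacts [⟨h.1.lt_of_ne (P.a_ne_of_isSuccLimit hα' hα hξ hlim), h.2⟩, h]

theorem colS_subset_U1 {α φ η ξ γ : Ordinal} (hξ : ξ ∈ P.M φ) (hηξ : η ≤ ξ)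
    (hγ : γ ∈ P.I α ξ) : P.colS γ ⊆ Subtype.val ⁻¹' P.U1 α φ η :=
  fun x hx => Or.inr (mem_biUnion (mem_biUnion ⟨hξ, hηξ⟩ hγ) ⟨x.2, hx⟩)

def ContainsTailColumns (α φ : Ordinal) (U : Set P.Xset) : Prop :=
  ∃ η < P.mu.ord, ∀ ξ ∈ P.M φ, η ≤ ξ → ξ < P.mu.ord →
    ∀ γ ∈ Ioc (P.a α ξ) (P.a α (ξ + 1)), P.colS γ ⊆ U

variable {P}

theorem ContainsTailColumns.mono {α φ : Ordinal} {U V : Set P.Xset}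
    (hU : P.ContainsTailColumns α φ U) (hUV : U ⊆ V) : P.ContainsTailColumns α φ V :=
  let ⟨η, hη, h⟩ := hU
  ⟨η, hη, fun ξ hξM hηξ hξ γ hγ => (h ξ hξM hηξ hξ γ hγ).trans hUV⟩

theorem ContainsTailColumns.inter {α φ : Ordinal} {U V : Set P.Xset}
    (hU : P.ContainsTailColumns α φ U) (hV : P.ContainsTailColumns α φ V) :
    P.ContainsTailColumns α φ (U ∩ V) :=
  let ⟨η, hη, hU⟩ := hU
  let ⟨η', hη', hV⟩ := hV
  ⟨max η η', max_lt hη hη', fun ξ hξM hξ' hξ γ hγ =>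
    subset_inter (hU ξ hξM ((le_max_left _ _).trans hξ') hξ γ hγ)
      (hV ξ hξM ((le_max_right _ _).trans hξ') hξ γ hγ)⟩

variable (P)

theorem containsTailColumns_of_mem_basics (hlam : P.lam = Order.succ P.mu) {α φ : Ordinal}
    (hα : α ∈ Sset P.lam.ord P.mu) {B : Set (Ordinal × Ordinal)} (hB : B ∈ P.basics)
    (hαφ : (α, φ) ∈ B) : P.ContainsTailColumns α φ (Subtype.val ⁻¹' B) := by
  rcases hB with ⟨α', hα', φ', hφ', η', hη', rfl⟩ | ⟨α', -, hcof, rfl⟩ | ⟨α', hα'lam, hcof, -⟩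
  · rcases hαφ with hcenter | hcol
    · obtain ⟨rfl, rfl⟩ := Prod.mk.inj hcenter
      exact ⟨η', hη', fun ξ hξM hηξ _ γ hγ => P.colS_subset_U1 hξM hηξ (P.Ioc_subset_I α ξ hγ)⟩
    simp only [mem_iUnion] at hcol
    obtain ⟨_, ⟨ξ', ⟨hξ'M, hηξ'⟩, hαI⟩, -, rfl⟩ := hcol
    obtain ⟨hlo, hhi⟩ := P.mem_Ioc_of_mem_I hα' hα (P.M_sub φ' hφ' hξ'M) hαI
    obtain ⟨ξ₀, hξ₀, hle⟩ := P.a_unbounded α hα _ hlo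
    refine ⟨ξ₀, hξ₀, fun ξ _ hξ₀ξ hξ γ hγ =>
      P.colS_subset_U1 hξ'M hηξ' (P.Ioc_subset_I _ _ ⟨?_, ?_⟩)⟩
    · exact hle.trans_lt ((P.a_le_a_of_le hα hξ hξ₀ξ).trans_lt hγ.1)
    · exact (hγ.2.trans_lt (P.a_lt α hα _ (P.isSuccLimit_mu_ord.add_one_lt hξ))).le.trans hhi
  · obtain ⟨rfl, -⟩ := Prod.mk.inj hαφ
    exact absurd hα.2 hcof.ne
  · -- Below `λ = μ⁺` no ordinal has cofinality above `μ`.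
    have : α'.card ≤ P.mu := Order.lt_succ_iff.1 (hlam ▸ Cardinal.lt_ord.1 hα'lam)
    exact absurd (hcof.trans_le ((Ordinal.cof_le_card α').trans this)) (lt_irrefl _)

theorem containsTailColumns_of_isOpen (hlam : P.lam = Order.succ P.mu) {x : P.Xset}
    (hα : x.1.1 ∈ Sset P.lam.ord P.mu) {U : Set P.Xset} (hU : IsOpen U) (hxU : x ∈ U) :
    P.ContainsTailColumns x.1.1 x.1.2 U := by
  induction hU with
  | basic V hV =>
    obtain ⟨B, hB, rfl⟩ := hV
    exact P.containsTailColumns_of_mem_basics hlam hα hB hxU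
  | univ => exact ⟨0, P.isSuccLimit_mu_ord.bot_lt, fun _ _ _ _ _ _ => subset_univ _⟩
  | inter U V _ _ ihU ihV => exact (ihU hxU.1).inter (ihV hxU.2)
  | sUnion S _ ih =>
    obtain ⟨U, hUS, hxU⟩ := hxU
    exact (ih U hUS hxU).mono (subset_sUnion_of_mem hUS)

theorem mem_of_isClosed (hlam : P.lam = Order.succ P.mu) {F : Set P.Xset} (hF : IsClosed F)
    {x : P.Xset} (hα : x.1.1 ∈ Sset P.lam.ord P.mu)
    (hfreq : ∀ η < P.mu.ord, ∃ ξ ∈ P.M x.1.2, η ≤ ξ ∧ ξ < P.mu.ord ∧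
      ∃ γ ∈ P.pi F, γ ∈ Ioc (P.a x.1.1 ξ) (P.a x.1.1 (ξ + 1))) :
    x ∈ F := by
  rw [← hF.closure_eq, mem_closure_iff]
  intro U hU hxU
  obtain ⟨η, hη, hcols⟩ := P.containsTailColumns_of_isOpen hlam hα hU hxU
  obtain ⟨ξ, hξM, hηξ, hξ, _, ⟨y, hyF, rfl⟩, hγ⟩ := hfreq η hη
  exact ⟨y, hcols ξ hξM hηξ hξ _ hγ rfl, hyF⟩

theorem mk_Xset_le (hκ : 0 < P.kappa) : #P.Xset ≤ Cardinal.lift.{1} (P.lam * P.kappa) := by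
  have hsub : P.Xset ⊆ Iio P.lam.ord ×ˢ Iio P.kappa.ord := fun p hp =>
    ⟨hp.1, hp.2.elim (·.2) fun h => h.2 ▸ Cardinal.ord_pos.2 hκ⟩
  calc #P.Xset ≤ #(Iio P.lam.ord ×ˢ Iio P.kappa.ord) := Cardinal.mk_le_mk_of_subset hsub
    _ = Cardinal.lift.{1} (P.lam * P.kappa) := by
      rw [Cardinal.mk_congr (Equiv.Set.prod _ _), Cardinal.mk_prod, Cardinal.mk_Iio_ordinal,
        Cardinal.mk_Iio_ordinal]
      simp

theorem lift_mu_lt_mk_inter_colS (hunc : ℵ₀ < P.mu) (hlam : P.lam = Order.succ P.mu)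
    (hNS : ∀ φ < P.kappa.ord, IsNonstationaryBelow (P.M φ) P.mu.ord)
    {F : Set P.Xset} (hF : IsClosed F) {α : Ordinal} (hα : α ∈ Sset P.lam.ord P.mu)
    (hN : IsStationaryBelow
      {ξ | ξ < P.mu.ord ∧ ∃ γ ∈ P.pi F, γ ∈ Ioc (P.a α ξ) (P.a α (ξ + 1))} P.mu.ord) :
    Cardinal.lift.{1} P.mu < #(F ∩ P.colS α : Set P.Xset) := by
  set N := {ξ | ξ < P.mu.ord ∧ ∃ γ ∈ P.pi F, γ ∈ Ioc (P.a α ξ) (P.a α (ξ + 1))}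
  have hcof : P.mu.ord.cof = P.mu := P.mu_reg.cof_ord
  have hΦ := P.lift_mu_lt_mk_largeIntersectionIndices (N := N) fun Ψ hΨκ hΨ β hβ =>
    (hN.diff_biUnion (by rwa [hcof]) (by rwa [hcof]) fun ψ hψ => hNS ψ (hΨκ hψ)).exists_mem_Ico hβ
  let point (φ : P.largeIntersectionIndices N) : P.Xset := ⟨(α, φ), hα.1, .inl ⟨hα, φ.2.1⟩⟩
  have hpoint (φ : P.largeIntersectionIndices N) : point φ ∈ F ∩ P.colS α := by
    refine ⟨P.mem_of_isClosed hlam hF hα fun η hη => ?_, rfl⟩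
    obtain ⟨ξ, ⟨⟨hξ, hξF⟩, hξM⟩, hηξ⟩ := inter_Ici_nonempty_of_mk_eq φ.2.2 hη
    exact ⟨ξ, hξM, hηξ, hξ, hξF⟩
  refine hΦ.trans_le (Cardinal.mk_le_of_injective (f := fun φ => ⟨point φ, hpoint φ⟩) ?_)
  intro φ ψ h
  exact Subtype.ext (congrArg (fun x : ↥(F ∩ P.colS α) => x.1.1.2) h)

theorem exists_mem_Ico_lift_lam_le_mk_inter_colS (hunc : ℵ₀ < P.mu)
    (hlam : P.lam = Order.succ P.mu)
    (hNS : ∀ φ < P.kappa.ord, IsNonstationaryBelow (P.M φ) P.mu.ord)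
    (hguess : ∀ E : Set Ordinal, IsClubBelow E P.lam.ord →
      ∃ α ∈ Sset P.lam.ord P.mu,
        IsStationaryBelow {ξ | ξ < P.mu.ord ∧ P.a α (ξ + 1) ∈ E} P.mu.ord)
    {F : Set P.Xset} (hF : IsClosed F) (hub : P.Unbounded F) {s : Ordinal} (hs : s < P.lam.ord) :
    ∃ α ∈ Ico s P.lam.ord, Cardinal.lift.{1} P.lam ≤ #(F ∩ P.colS α : Set P.Xset) := by
  have hclub := isClubBelow_setOf_forall_exists_mem_Ioc (A := P.pi F ∩ Ioi s) fun β hβ => by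
    obtain ⟨γ, ⟨x, hxF, rfl⟩, hγ⟩ := hub (max β s) (max_lt hβ hs)
    exact ⟨_, ⟨⟨x, hxF, rfl⟩, (le_max_right β s).trans_lt hγ⟩, (le_max_left β s).trans_lt hγ, x.2.1⟩
  obtain ⟨α, hα, hguessα⟩ := hguess _ hclub
  have hN := hguessα.mono (N' := {ξ | ξ < P.mu.ord ∧
      ∃ γ ∈ P.pi F ∩ Ioi s, γ ∈ Ioc (P.a α ξ) (P.a α (ξ + 1))}) fun ξ hξ =>
    ⟨hξ.1, hξ.2.2 _ (P.a_mono α hα _ (P.isSuccLimit_mu_ord.add_one_lt hξ.1) ξ (lt_add_one ξ))⟩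
  obtain ⟨ξ, ⟨hξ, γ, ⟨-, hsγ⟩, hγ⟩, -⟩ := hN.exists_mem_Ico P.isSuccLimit_mu_ord.bot_lt
  have hcol := P.lift_mu_lt_mk_inter_colS hunc hlam hNS hF hα
    (hN.mono fun ξ ⟨hξ, γ, hγ, hγI⟩ => ⟨hξ, γ, hγ.1, hγI⟩)
  refine ⟨α, ⟨?_, hα.1⟩, ?_⟩
  · exact (hsγ.trans_le hγ.2).le.trans (P.a_lt α hα _ (P.isSuccLimit_mu_ord.add_one_lt hξ)).le
  · rw [hlam, Cardinal.lift_succ]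
    exact Order.succ_le_of_lt hcol

end Setup

/-- If `λ = μ⁺` for `μ` uncountable regular, `C̄` guesses clubs in the sense of
Theorem (Shelah, successor-guessing) and `𝒜` is a nonstationary MAD family of size `μ⁺`,
then `X[μ⁺,μ,𝒜,C̄]` is high. -/
theorem stmt17 (P : Setup) (hunc : Cardinal.aleph0 < P.mu)
    (hlam : P.lam = Order.succ P.mu) (hkappa : P.kappa = Order.succ P.mu)
    (hNS : ∀ φ < P.kappa.ord, IsNonstationaryBelow (P.M φ) P.mu.ord)
    (hguess : ∀ E : Set Ordinal, IsClubBelow E P.lam.ord →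
      ∃ α ∈ Sset P.lam.ord P.mu,
        IsStationaryBelow {ξ | ξ < P.mu.ord ∧ P.a α (ξ + 1) ∈ E} P.mu.ord)
    (F : Set ↥P.Xset) (hF : IsClosed F) (hub : P.Unbounded F) :
    P.HighEnough F := by
  have hlamreg : P.lam.IsRegular := hlam ▸ Cardinal.isRegular_succ P.mu_reg.aleph0_le
  have hF_le : #F ≤ Cardinal.lift.{1} P.lam := by
    have hκ : 0 < P.kappa := hkappa ▸ (Order.lt_succ P.mu).pos
    refine (Cardinal.mk_set_le F).trans ((P.mk_Xset_le hκ).trans_eq ?_)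
    rw [hkappa, ← hlam, Cardinal.mul_eq_self hlamreg.aleph0_le]
  have hfull : ∀ s < P.lam.ord,
      ({α | #(F ∩ P.colS α : Set _) = #F} ∩ Ico s P.lam.ord).Nonempty := by
    intro s hs
    obtain ⟨α, hα, hαF⟩ :=
      P.exists_mem_Ico_lift_lam_le_mk_inter_colS hunc hlam hNS hguess hF hub hs
    exact ⟨α, (Cardinal.mk_le_mk_of_subset inter_subset_left).antisymm (hF_le.trans hαF), hα⟩
  calc Cardinal.lift.{1} P.mu ≤ Cardinal.lift.{1} P.lam.ord.cof := by
        rw [hlamreg.cof_ord]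
        exact Cardinal.lift_le.2 P.mu_lt_lam.le
    _ ≤ _ := lift_cof_le_mk_of_forall_inter_Ico_nonempty hfull

end DSoukupPaper
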